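/- arXiv:1810.11532 — 7 statements merged into one kernel-verified Lean document; each statement's English description precedes it below -/
import Mathlib

section
/- Let L ≥ 1 and let R = [r_{i,j}] be an L×L upper triangular real matrix whose diagonal entries λ_1,…,λ_L (λ_k = r_{k,k}) are pairwise distinct, and let p_{i,j,k} (1 ≤ i,j,k ≤ L) be the power factors of R. Then for all e, p⁰ ∈ ℝᴸ and every t ≥ 1, eᵀ Rᵗ p⁰ = Σ_{k=1}^{L} Σ_{i=1}^{L} Σ_{j=i}^{L} e_i · p_{i,j,k} · p⁰_j · λ_k^{t−1}. -/
/-!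
Collect the power factors with a fixed third index `k` into a matrix `P_k`. The recursive
clause for `k < j` says exactly that `P_k R = λ_k P_k` (the rows of `P_k` are left eigenvectors
of `R` for `λ_k`; this is where distinctness of the diagonal enters), and the clause for `p_{i,j,j}`
says that `∑ₖ P_k = R`. Induction on `s` then gives `R^(s+1) = ∑ₖ λ_k^s P_k`, and the formula
follows by pairing with `e` and `p⁰`.
-/

open Matrix

/-- The power factors `p_{i,j,k}` of an (`0`-based, `ℕ`-indexed) upper triangular
matrix `a` with pairwise distinct diagonal entries. -/
noncomputable def powerFactor (a : ℕ → ℕ → ℝ) : ℕ → ℕ → ℕ → ℝ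
  | i, j, k =>
    if i = j ∧ j = k then a j j
    else if hc : k < i ∨ j < k then 0
    else if hd : k < j then
      (∑ l ∈ (Finset.Ico k j).attach, powerFactor a i l.1 k * a l.1 j) / (a k k - a j j)
    else a i j - ∑ l ∈ (Finset.Ico i j).attach, powerFactor a i j l.1
  termination_by i j k => j + k
  decreasing_by
  · have := l.2; simp only [Finset.mem_Ico] at this; omega
  · have := l.2; simp only [Finset.mem_Ico] at this; omega

open Finset

section PowerFactor

variable (a : ℕ → ℕ → ℝ) {i j k : ℕ}

theorem powerFactor_eq_zero (h : k < i ∨ j < k) : powerFactor a i j k = 0 := by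
  rw [powerFactor, if_neg (by omega), dif_pos h]

theorem powerFactor_self (i : ℕ) : powerFactor a i i i = a i i := by
  rw [powerFactor, if_pos ⟨rfl, rfl⟩]

theorem powerFactor_of_le_of_lt (hik : i ≤ k) (hkj : k < j) :
    powerFactor a i j k
      = (∑ l ∈ Ico k j, powerFactor a i l k * a l j) / (a k k - a j j) := by
  rw [powerFactor, if_neg (by omega), dif_neg (by omega), dif_pos hkj,
    sum_attach (Ico k j) fun l => powerFactor a i l k * a l j]

theorem powerFactor_of_lt (hij : i < j) :
    powerFactor a i j j = a i j - ∑ l ∈ Ico i j, powerFactor a i j l := by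
  rw [powerFactor, if_neg (by omega), dif_neg (by omega), dif_neg (lt_irrefl j),
    sum_attach (Ico i j) fun l => powerFactor a i j l]

theorem sum_Icc_powerFactor (hij : i ≤ j) : ∑ k ∈ Icc i j, powerFactor a i j k = a i j := by
  rcases hij.eq_or_lt with rfl | hij
  · rw [Icc_self, sum_singleton, powerFactor_self]
  · rw [← Ico_insert_right hij.le, sum_insert right_notMem_Ico, powerFactor_of_lt a hij]
    ring

theorem sum_Icc_powerFactor_mul (hne : k < j → a k k ≠ a j j) :
    ∑ l ∈ Icc k j, powerFactor a i l k * a l j = a k k * powerFactor a i j k := by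
  rcases lt_or_ge j k with hjk | hkj
  · rw [Icc_eq_empty_of_lt hjk, sum_empty, powerFactor_eq_zero a (Or.inr hjk), mul_zero]
  rcases lt_or_ge k i with hki | hik
  · rw [powerFactor_eq_zero a (Or.inl hki), mul_zero]
    exact sum_eq_zero fun l _ => by rw [powerFactor_eq_zero a (Or.inl hki), zero_mul]
  rcases hkj.eq_or_lt with rfl | hkj
  · rw [Icc_self, sum_singleton, mul_comm]
  · have hsub : a k k - a j j ≠ 0 := sub_ne_zero.2 (hne hkj)
    rw [← Ico_insert_right hkj.le, sum_insert right_notMem_Ico,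
      powerFactor_of_le_of_lt a hik hkj]
    field_simp
    ring

end PowerFactor

theorem Fin.sum_univ_eq_sum_Icc_of_eq_zero {L m n : ℕ} (hn : n < L) (f : ℕ → ℝ)
    (hf : ∀ l < L, l ∉ Icc m n → f l = 0) : ∑ l : Fin L, f l = ∑ l ∈ Icc m n, f l := by
  rw [Fin.sum_univ_eq_sum_range f L]
  refine (sum_subset (fun l hl => ?_) fun l hl hl' => hf l (mem_range.1 hl) hl').symm
  simp only [mem_Icc, mem_range] at hl ⊢
  omega

noncomputable def powerFactorMatrix (a : ℕ → ℕ → ℝ) (L k : ℕ) : Matrix (Fin L) (Fin L) ℝ :=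
  Matrix.of fun i j => powerFactor a i j k

section UpperTriangular

variable {L : ℕ} {R : Matrix (Fin L) (Fin L) ℝ} {A : ℕ → ℕ → ℝ}

theorem sum_powerFactorMatrix (hRtri : ∀ i j : Fin L, j < i → R i j = 0)
    (hA : ∀ i j : Fin L, A i j = R i j) :
    ∑ k : Fin L, powerFactorMatrix A L k = R := by
  ext i j
  simp only [Matrix.sum_apply, powerFactorMatrix, Matrix.of_apply]
  rcases lt_or_ge j i with hji | hij
  · rw [hRtri i j hji]
    exact sum_eq_zero fun k _ => powerFactor_eq_zero A (by have := Fin.lt_def.1 hji; omega)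
  · rw [Fin.sum_univ_eq_sum_Icc_of_eq_zero (m := i) j.isLt (fun k => powerFactor A i j k)
      fun k _ hk => by simp only [mem_Icc] at hk; exact powerFactor_eq_zero A (by omega),
      sum_Icc_powerFactor A hij, hA]

theorem powerFactorMatrix_mul (hRtri : ∀ i j : Fin L, j < i → R i j = 0)
    (hdiag : ∀ i j : Fin L, i ≠ j → R i i ≠ R j j)
    (hA : ∀ i j : Fin L, A i j = R i j) (k : Fin L) :
    powerFactorMatrix A L k * R = R k k • powerFactorMatrix A L k := by
  ext i j
  simp only [Matrix.mul_apply, Matrix.smul_apply, powerFactorMatrix, Matrix.of_apply,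
    smul_eq_mul, ← hA]
  have hvanish : ∀ l < L, l ∉ Icc (k : ℕ) j → powerFactor A i l k * A l j = 0 := by
    intro l hl hl'
    rcases lt_or_ge l k with hlk | hkl
    · rw [powerFactor_eq_zero A (Or.inr hlk), zero_mul]
    · rw [hA ⟨l, hl⟩ j, hRtri ⟨l, hl⟩ j
      (Fin.lt_def.2 (show (j : ℕ) < l by simp only [mem_Icc] at hl'; omega)), mul_zero]
  rw [Fin.sum_univ_eq_sum_Icc_of_eq_zero j.isLt (fun l => powerFactor A i l k * A l j) hvanish,
    sum_Icc_powerFactor_mul A fun hkj => by rw [hA, hA]; exact hdiag k j (by omega)]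

theorem pow_succ_eq_sum_smul_powerFactorMatrix (hRtri : ∀ i j : Fin L, j < i → R i j = 0)
    (hdiag : ∀ i j : Fin L, i ≠ j → R i i ≠ R j j)
    (hA : ∀ i j : Fin L, A i j = R i j) (s : ℕ) :
    R ^ (s + 1) = ∑ k : Fin L, R k k ^ s • powerFactorMatrix A L k := by
  induction s with
  | zero => simp only [zero_add, pow_one, pow_zero, one_smul, sum_powerFactorMatrix hRtri hA]
  | succ s ih =>
    rw [pow_succ, ih, sum_mul]
    refine sum_congr rfl fun k _ => ?_
    rw [smul_mul_assoc, powerFactorMatrix_mul hRtri hdiag hA, smul_smul, pow_succ]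

end UpperTriangular

theorem stmt_5_general (L : ℕ)
    (R : Matrix (Fin L) (Fin L) ℝ)
    (hRtri : ∀ i j : Fin L, j < i → R i j = 0)
    (hdiag : ∀ i j : Fin L, i ≠ j → R i i ≠ R j j)
    (A : ℕ → ℕ → ℝ) (hA : ∀ i j : Fin L, A (i : ℕ) (j : ℕ) = R i j)
    (e p0 : Fin L → ℝ) :
    ∀ t : ℕ, 1 ≤ t → e ⬝ᵥ ((R ^ t) *ᵥ p0)
      = ∑ k : Fin L, ∑ i : Fin L, ∑ j ∈ Finset.Ici i,
          e i * powerFactor A (i : ℕ) (j : ℕ) (k : ℕ) * p0 j * (R k k) ^ (t - 1) := by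
  intro t ht
  obtain ⟨s, rfl⟩ : ∃ s, t = s + 1 := ⟨t - 1, by omega⟩
  rw [pow_succ_eq_sum_smul_powerFactorMatrix hRtri hdiag hA, sum_mulVec, dotProduct_sum,
    Nat.add_sub_cancel]
  refine sum_congr rfl fun k _ => ?_
  have hupper : ∀ i : Fin L, ∑ j ∈ Ici i, e i * powerFactor A i j k * p0 j * R k k ^ s
      = ∑ j : Fin L, e i * powerFactor A i j k * p0 j * R k k ^ s := fun i =>
    sum_subset (subset_univ _) fun j _ hj => by
      simp only [mem_Ici, not_le, Fin.lt_def] at hj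
      rw [powerFactor_eq_zero A (i := i) (j := j) (k := k) (by omega)]
      ring
  rw [smul_mulVec, dotProduct_smul, smul_eq_mul]
  simp only [hupper, dotProduct, mulVec, powerFactorMatrix, Matrix.of_apply, mul_sum]
  exact sum_congr rfl fun i _ => sum_congr rfl fun j _ => by ring

/-- exact error expression for an upper triangular matrix with
pairwise distinct diagonal entries, via its power factors. -/
theorem stmt_5 (L : ℕ) (hL : 1 ≤ L)
    (R : Matrix (Fin L) (Fin L) ℝ)
    (hRtri : ∀ i j : Fin L, j < i → R i j = 0)
    (hdiag : ∀ i j : Fin L, i ≠ j → R i i ≠ R j j)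
    (A : ℕ → ℕ → ℝ) (hA : ∀ i j : Fin L, A (i : ℕ) (j : ℕ) = R i j)
    (e p0 : Fin L → ℝ) :
    ∀ t : ℕ, 1 ≤ t → e ⬝ᵥ ((R ^ t) *ᵥ p0)
      = ∑ k : Fin L, ∑ i : Fin L, ∑ j ∈ Finset.Ici i,
          e i * powerFactor A (i : ℕ) (j : ℕ) (k : ℕ) * p0 j * (R k k) ^ (t - 1) :=
  stmt_5_general L R hRtri hdiag A hA e p0
end

section
/- Let L ≥ 1 and let T = [t_{i,j}] be an L×L upper triangular complex matrix with diagonal entries λ_i = t_{i,i}. Then for every t ≥ 1 and all indices 1 ≤ i, j ≤ L: (a) the (i,i) entry of Tᵗ equals λ_iᵗ; (b) the (i,j) entry of Tᵗ is 0 when i > j; and (c) when i < j, the (i,j) entry of Tᵗ equals Σ_{m=1}^{j−i} Σ_{α} ( (Π_{l=1}^{m} t_{α_l, α_{l+1}}) · Σ_{β} Π_{k=1}^{m+1} λ_{α_k}^{β_k} ), where the middle sum ranges over all strictly increasing integer sequences i = α_1 < α_2 < … < α_{m+1} = j, and the inner sum ranges over all (m+1)-tuples of nonnegative integers (β_1,…,β_{m+1})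 with β_1 + … + β_{m+1} = t − m (this inner sum being empty, hence 0, when t < m). -/
/-!
Write `T = N + D` with `D` diagonal and `N` strictly upper triangular. Let `X m n` be the sum of
the words in `N` and `D` with `m` letters `N` and `n` letters `D`, so that `T ^ t = ∑_{m+n=t} X m n`
because `X` obeys the recursion `X (m+1) (n+1) = N X m (n+1) + D X (m+1) n` of lattice paths.
The `(i, j)` entry of `X m n` is a sum over strictly increasing paths `i = α₀ < ⋯ < αₘ = j`, one
factor of `N` per jump, with the `n` factors of `D` spread over the `m + 1` visited vertices;
this spreading produces the complete homogeneous sum `∑_{|β| = n} ∏ₖ λ_{αₖ} ^ βₖ`, and the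
recursion for `X` is the splitting off of the first vertex of a path.
-/

open Finset Matrix

section CompleteHomogeneous

variable {R : Type*} [CommSemiring R]

def completeHomogeneous {k : ℕ} (n : ℕ) (c : Fin k → R) : R :=
  ∑ β ∈ Nat.antidiagonalTuple k n, ∏ i, c i ^ β i

@[simp] lemma completeHomogeneous_zero {k : ℕ} (c : Fin k → R) :
    completeHomogeneous 0 c = 1 := by
  simp [completeHomogeneous, Nat.antidiagonalTuple_zero_right]

lemma completeHomogeneous_const_fin_one (n : ℕ) (x : R) :
    completeHomogeneous n (fun _ : Fin 1 => x) = x ^ n := by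
  simp [completeHomogeneous]

lemma completeHomogeneous_succ_cons {k : ℕ} (n : ℕ) (x : R) (c : Fin k → R) :
    completeHomogeneous (n + 1) (Fin.cons x c : Fin (k + 1) → R) =
      x * completeHomogeneous n (Fin.cons x c : Fin (k + 1) → R) +
        completeHomogeneous (n + 1) c := by
  unfold completeHomogeneous
  -- tuples with `β 0 = 0` are the tuples for `c`; lowering `β 0 ≥ 1` by one gives the factor `x`
  rw [← sum_filter_not_add_sum_filter _ (fun β => β 0 = 0), mul_sum]
  congr 1
  · refine sum_nbij' (fun β => Fin.cons (β 0 - 1) (Fin.tail β))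
      (fun β => Fin.cons (β 0 + 1) (Fin.tail β)) ?_ ?_ ?_ ?_ ?_
    · intro β hβ
      simp only [mem_filter, Nat.mem_antidiagonalTuple, Fin.sum_univ_succ] at hβ ⊢
      simp only [Fin.cons_zero, Fin.cons_succ, Fin.tail]
      omega
    · intro β hβ
      simp only [mem_filter, Nat.mem_antidiagonalTuple, Fin.sum_univ_succ] at hβ ⊢
      simp only [Fin.cons_zero, Fin.cons_succ, Fin.tail]
      omega
    · intro β hβ
      simp only [mem_filter] at hβ
      simp only [Fin.cons_zero, Fin.tail_cons, Nat.sub_add_cancel (Nat.pos_of_ne_zero hβ.2),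
        Fin.cons_self_tail]
    · intro β hβ
      simp [Fin.cons_self_tail]
    · intro β hβ
      simp only [mem_filter] at hβ
      simp only [Fin.prod_univ_succ, Fin.cons_zero, Fin.cons_succ, Fin.tail]
      rw [← mul_assoc, ← pow_succ', Nat.sub_add_cancel (Nat.pos_of_ne_zero hβ.2)]
  · refine sum_nbij' Fin.tail (fun β : Fin k → ℕ => (Fin.cons 0 β : Fin (k + 1) → ℕ))
      ?_ ?_ ?_ ?_ ?_
    · intro β hβ
      simp only [mem_filter, Nat.mem_antidiagonalTuple, Fin.sum_univ_succ] at hβ ⊢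
      simpa [hβ.2, Fin.tail] using hβ.1
    · intro β hβ
      simp only [mem_filter, Nat.mem_antidiagonalTuple, Fin.sum_univ_succ] at hβ ⊢
      simpa using hβ
    · intro β hβ
      simp only [mem_filter] at hβ
      rw [← hβ.2, Fin.cons_self_tail]
    · intro β hβ
      simp
    · intro β hβ
      simp_all [Fin.prod_univ_succ, Fin.tail]

end CompleteHomogeneous

theorem add_pow_eq_sum_antidiagonal {A : Type*} [Semiring A] (a b : A) (X : ℕ → ℕ → A)
    (h₀₀ : X 0 0 = 1) (h₀ : ∀ n, X 0 (n + 1) = b * X 0 n) (h₁ : ∀ m, X (m + 1) 0 = a * X m 0)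
    (h : ∀ m n, X (m + 1) (n + 1) = a * X m (n + 1) + b * X (m + 1) n) (t : ℕ) :
    (a + b) ^ t = ∑ p ∈ antidiagonal t, X p.1 p.2 := by
  induction t with
  | zero => simp [h₀₀]
  | succ t ih =>
    let P : ℕ × ℕ → A := fun p => if p.1 = 0 then 0 else a * X (p.1 - 1) p.2
    let Q : ℕ × ℕ → A := fun p => if p.2 = 0 then 0 else b * X p.1 (p.2 - 1)
    have hX : ∀ p ∈ antidiagonal (t + 1), X p.1 p.2 = P p + Q p := by
      rintro ⟨_ | m, _ | n⟩ hp
      · simp at hp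
      · simp [P, Q, h₀]
      · simp [P, Q, h₁]
      · simp [P, Q, h]
    rw [sum_congr rfl hX, sum_add_distrib, Nat.sum_antidiagonal_succ,
      Nat.sum_antidiagonal_succ', pow_succ', ih, add_mul, mul_sum, mul_sum]
    simp [P, Q]

lemma Fin.strictMono_cons_iff {α : Type*} [Preorder α] {n : ℕ} {x : α} {f : Fin (n + 1) → α} :
    StrictMono (Fin.cons x f : Fin (n + 2) → α) ↔ x < f 0 ∧ StrictMono f := by
  simp only [Fin.strictMono_iff_lt_succ, Fin.forall_fin_succ (n := n), Fin.cons_succ,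
    Fin.castSucc_zero, Fin.cons_zero, ← Fin.succ_castSucc]

section IncreasingPaths

variable {ι : Type*} [Fintype ι] [LinearOrder ι]

open scoped Classical in
noncomputable def increasingPaths (m : ℕ) (i j : ι) : Finset (Fin (m + 1) → ι) :=
  {α | StrictMono α ∧ α 0 = i ∧ α (Fin.last m) = j}

lemma mem_increasingPaths {m : ℕ} {i j : ι} {α : Fin (m + 1) → ι} :
    α ∈ increasingPaths m i j ↔ StrictMono α ∧ α 0 = i ∧ α (Fin.last m) = j := by
  simp [increasingPaths]

lemma increasingPaths_zero (i j : ι) :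
    increasingPaths 0 i j = if i = j then {fun _ => i} else ∅ := by
  ext α
  split_ifs with h
  · subst h; simp [mem_increasingPaths, funext_iff, Fin.forall_fin_one, Subsingleton.strictMono]
  · simp only [mem_increasingPaths, notMem_empty, iff_false, not_and]
    rintro - rfl
    exact h

lemma sum_increasingPaths_succ {M : Type*} [AddCommMonoid M] (m : ℕ) (i j : ι)
    (f : (Fin (m + 2) → ι) → M) :
    ∑ α ∈ increasingPaths (m + 1) i j, f α =
      ∑ k with i < k, ∑ α ∈ increasingPaths m k j, f (Fin.cons i α) := by
  rw [sum_sigma']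
  refine sum_bij' (fun α _ => ⟨α 1, Fin.tail α⟩) (fun p _ => Fin.cons i p.2) ?_ ?_ ?_ ?_ ?_
  · intro α hα
    obtain ⟨hmono, rfl, rfl⟩ := mem_increasingPaths.1 hα
    rw [← Fin.cons_self_tail α, Fin.strictMono_cons_iff] at hmono
    exact mem_sigma.2
      ⟨mem_filter.2 ⟨mem_univ _, hmono.1⟩, mem_increasingPaths.2 ⟨hmono.2, rfl, rfl⟩⟩
  · rintro ⟨k, α⟩ hp
    simp only [mem_sigma, mem_filter, mem_univ, true_and, mem_increasingPaths] at hp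
    obtain ⟨hik, hmono, rfl, rfl⟩ := hp
    simpa [mem_increasingPaths, Fin.strictMono_cons_iff] using ⟨hik, hmono⟩
  · intro α hα
    rw [← (mem_increasingPaths.1 hα).2.1, Fin.cons_self_tail]
  · rintro ⟨k, α⟩ hp
    simp only [mem_sigma, mem_filter, mem_univ, true_and, mem_increasingPaths] at hp
    simp [← hp.2.2.1]
  · intro α hα
    rw [← (mem_increasingPaths.1 hα).2.1, Fin.cons_self_tail]

lemma increasingPaths_eq_empty {L m : ℕ} {i j : Fin L} (h : (j : ℕ) < i + m) :
    increasingPaths m i j = ∅ := by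
  refine eq_empty_of_forall_notMem fun α hα => ?_
  obtain ⟨hmono, rfl, rfl⟩ := mem_increasingPaths.1 hα
  have : (univ.image α) ⊆ Icc (α 0) (α (Fin.last m)) := by
    intro x hx
    obtain ⟨k, -, rfl⟩ := mem_image.1 hx
    exact mem_Icc.2 ⟨hmono.monotone (Fin.zero_le k), hmono.monotone (Fin.le_last k)⟩
  have := card_le_card this
  rw [card_image_of_injective _ hmono.injective, Fin.card_Icc, card_univ,
    Fintype.card_fin] at this
  omega

end IncreasingPaths

section PathSum

variable {ι R : Type*} [CommSemiring R]

noncomputable def pathWeight (T : Matrix ι ι R) (n : ℕ) {m : ℕ} (α : Fin (m + 1) → ι) : R :=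
  (∏ l : Fin m, T (α l.castSucc) (α l.succ)) * completeHomogeneous n (fun k => T (α k) (α k))

lemma pathWeight_cons_zero (T : Matrix ι ι R) {m : ℕ} (i : ι) (α : Fin (m + 1) → ι) :
    pathWeight T 0 (Fin.cons i α : Fin (m + 2) → ι) = T i (α 0) * pathWeight T 0 α := by
  simp [pathWeight, Fin.prod_univ_succ]

lemma pathWeight_cons_succ (T : Matrix ι ι R) (n : ℕ) {m : ℕ} (i : ι) (α : Fin (m + 1) → ι) :
    pathWeight T (n + 1) (Fin.cons i α : Fin (m + 2) → ι) =
      T i i * pathWeight T n (Fin.cons i α : Fin (m + 2) → ι) +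
        T i (α 0) * pathWeight T (n + 1) α := by
  have hdiag : (fun k => T ((Fin.cons i α : Fin (m + 2) → ι) k)
      ((Fin.cons i α : Fin (m + 2) → ι) k)) = Fin.cons (T i i) (fun k => T (α k) (α k)) := by
    ext k; cases k using Fin.cases <;> rfl
  simp only [pathWeight, hdiag, completeHomogeneous_succ_cons, Fin.prod_univ_succ, Fin.cons_zero,
    Fin.cons_succ, Fin.castSucc_zero, ← Fin.succ_castSucc]
  ring

section LinearOrder

variable [LinearOrder ι]

def strictUpper (T : Matrix ι ι R) : Matrix ι ι R :=
  of fun i j => if i < j then T i j else 0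

lemma diagonal_diag_add_strictUpper {T : Matrix ι ι R} (hT : T.IsUpperTriangular) :
    diagonal T.diag + strictUpper T = T := by
  ext i j
  rcases lt_trichotomy i j with h | rfl | h
  · simp [strictUpper, h, h.ne]
  · simp [strictUpper]
  · simp [strictUpper, h.ne', not_lt.2 h.le, hT h]

variable [Fintype ι]

lemma strictUpper_mul_apply (T M : Matrix ι ι R) (i j : ι) :
    (strictUpper T * M) i j = ∑ k with i < k, T i k * M k j := by
  simp [strictUpper, mul_apply, sum_filter, ite_mul]

/-- The `(i, j)` entry sums over the walks from `i` to `j` with `m` strictly increasing jumps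
and `n` stays. -/
noncomputable def pathSum (T : Matrix ι ι R) (m n : ℕ) : Matrix ι ι R :=
  of fun i j => ∑ α ∈ increasingPaths m i j, pathWeight T n α

lemma pathSum_apply (T : Matrix ι ι R) (m n : ℕ) (i j : ι) :
    pathSum T m n i j = ∑ α ∈ increasingPaths m i j, pathWeight T n α :=
  rfl

lemma pathSum_apply_eq_sum_ite (T : Matrix ι ι R) (m n : ℕ) (i j : ι) :
    pathSum T m n i j = ∑ α : Fin (m + 1) → ι,
      if (∀ a b : Fin (m + 1), a < b → α a < α b) ∧ α 0 = i ∧ α (Fin.last m) = j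
      then pathWeight T n α else 0 := by
  rw [pathSum_apply, increasingPaths, sum_filter]
  exact sum_congr rfl fun α _ => if_congr Iff.rfl rfl rfl

lemma pathSum_zero_left (T : Matrix ι ι R) (n : ℕ) :
    pathSum T 0 n = diagonal fun i => T i i ^ n := by
  ext i j
  rw [pathSum, of_apply, increasingPaths_zero, diagonal_apply]
  split_ifs <;> simp [pathWeight, completeHomogeneous_const_fin_one]

lemma pathSum_succ_zero (T : Matrix ι ι R) (m : ℕ) :
    pathSum T (m + 1) 0 = strictUpper T * pathSum T m 0 := by
  ext i j
  simp only [strictUpper_mul_apply, pathSum_apply, sum_increasingPaths_succ, pathWeight_cons_zero,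
    mul_sum]
  refine sum_congr rfl fun k _ => sum_congr rfl fun α hα => ?_
  rw [(mem_increasingPaths.1 hα).2.1]

lemma pathSum_succ_succ (T : Matrix ι ι R) (m n : ℕ) :
    pathSum T (m + 1) (n + 1) =
      strictUpper T * pathSum T m (n + 1) + diagonal T.diag * pathSum T (m + 1) n := by
  ext i j
  simp only [Matrix.add_apply, strictUpper_mul_apply, diagonal_mul, diag_apply, pathSum_apply,
    sum_increasingPaths_succ, pathWeight_cons_succ, sum_add_distrib, mul_sum]
  rw [add_comm]
  congr 1
  refine sum_congr rfl fun k _ => sum_congr rfl fun α hα => ?_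
  rw [(mem_increasingPaths.1 hα).2.1]

theorem pow_eq_sum_pathSum {T : Matrix ι ι R} (hT : T.IsUpperTriangular) (t : ℕ) :
    T ^ t = ∑ p ∈ antidiagonal t, pathSum T p.1 p.2 := by
  calc T ^ t = (strictUpper T + diagonal T.diag) ^ t := by
        rw [add_comm, diagonal_diag_add_strictUpper hT]
    _ = _ := add_pow_eq_sum_antidiagonal _ _ _ (by simp [pathSum_zero_left])
        (fun n => by simp [pathSum_zero_left, pow_succ']) (pathSum_succ_zero T)
        (pathSum_succ_succ T) t

theorem pow_apply_eq_sum_range {T : Matrix ι ι R} (hT : T.IsUpperTriangular) (t : ℕ) (i j : ι) :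
    (T ^ t) i j = ∑ m ∈ range (t + 1), pathSum T m (t - m) i j := by
  rw [pow_eq_sum_pathSum hT, Matrix.sum_apply, Nat.sum_antidiagonal_eq_sum_range_succ_mk]

end LinearOrder

end PathSum

section Fin

variable {R : Type*} [CommSemiring R] {L : ℕ}

lemma pathSum_apply_eq_zero (T : Matrix (Fin L) (Fin L) R) {m : ℕ} (n : ℕ) {i j : Fin L}
    (h : (j : ℕ) < i + m) : pathSum T m n i j = 0 := by
  rw [pathSum_apply, increasingPaths_eq_empty h, sum_empty]

lemma sum_range_pathSum_eq_sum_Icc (T : Matrix (Fin L) (Fin L) R) (t : ℕ) {i j : Fin L}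
    (hij : i < j) :
    ∑ m ∈ range (t + 1), pathSum T m (t - m) i j =
      ∑ m ∈ Icc 1 ((j : ℕ) - i), if m ≤ t then pathSum T m (t - m) i j else 0 := by
  have hij' : (i : ℕ) < j := hij
  rw [← sum_filter]
  refine (sum_subset (fun m hm => ?_) fun m hm hm' => ?_).symm
  · simp only [mem_filter, mem_Icc, mem_range] at hm ⊢
    omega
  · simp only [mem_filter, mem_Icc, mem_range, not_and, not_le] at hm hm'
    rcases Nat.eq_zero_or_pos m with rfl | hm0
    · rw [pathSum_zero_left, diagonal_apply_ne _ hij.ne]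
    · exact pathSum_apply_eq_zero T _ (by omega)

end Fin

theorem stmt_6_general (L : ℕ)
    (T : Matrix (Fin L) (Fin L) ℂ)
    (hT : ∀ i j : Fin L, j < i → T i j = 0) :
    ∀ t : ℕ, 1 ≤ t → ∀ i j : Fin L,
      ((T ^ t) i i = (T i i) ^ t) ∧
      (j < i → (T ^ t) i j = 0) ∧
      (i < j → (T ^ t) i j =
        ∑ m ∈ Finset.Icc 1 ((j : ℕ) - (i : ℕ)),
          ∑ α : Fin (m + 1) → Fin L,
            if (∀ a b : Fin (m + 1), a < b → α a < α b) ∧ α 0 = i ∧ α (Fin.last m) = j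
            then
              (∏ l : Fin m, T (α l.castSucc) (α l.succ)) *
                (if m ≤ t then
                  ∑ β ∈ Finset.Nat.antidiagonalTuple (m + 1) (t - m),
                    ∏ kk : Fin (m + 1), (T (α kk) (α kk)) ^ β kk
                 else 0)
            else 0) := by
  intro t _ i j
  have hU : T.IsUpperTriangular := fun i j h => hT i j h
  refine ⟨?_, fun hji => hU.pow t hji, fun hij => ?_⟩
  · rw [pow_apply_eq_sum_range hU, sum_range_succ',
      sum_eq_zero fun m _ => pathSum_apply_eq_zero T _ (by omega), zero_add, pathSum_zero_left,
      diagonal_apply_eq, Nat.sub_zero]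
  · rw [pow_apply_eq_sum_range hU, sum_range_pathSum_eq_sum_Icc T t hij]
    refine sum_congr rfl fun m _ => ?_
    split_ifs with hmt
    · exact pathSum_apply_eq_sum_ite T m (t - m) i j
    · simp

/-- explicit entrywise formula for powers of an upper triangular matrix. -/
theorem stmt_6 (L : ℕ) (hL : 1 ≤ L)
    (T : Matrix (Fin L) (Fin L) ℂ)
    (hT : ∀ i j : Fin L, j < i → T i j = 0) :
    ∀ t : ℕ, 1 ≤ t → ∀ i j : Fin L,
      ((T ^ t) i i = (T i i) ^ t) ∧
      (j < i → (T ^ t) i j = 0) ∧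
      (i < j → (T ^ t) i j =
        ∑ m ∈ Finset.Icc 1 ((j : ℕ) - (i : ℕ)),
          ∑ α : Fin (m + 1) → Fin L,
            if (∀ a b : Fin (m + 1), a < b → α a < α b) ∧ α 0 = i ∧ α (Fin.last m) = j
            then
              (∏ l : Fin m, T (α l.castSucc) (α l.succ)) *
                (if m ≤ t then
                  ∑ β ∈ Finset.Nat.antidiagonalTuple (m + 1) (t - m),
                    ∏ kk : Fin (m + 1), (T (α kk) (α kk)) ^ β kk
                 else 0)
            else 0) :=
  stmt_6_general L T hT
end

section
/- Let L ≥ 1 and let P = [p_{i,j}] (i,j ∈ {0,1,…,L}) be a column-stochastic real matrix (entries nonnegative, each column summing to 1) with p_{0,0} = 1. Let e_0 = 0 and e_1,…,e_L > 0, and for i ∈ {1,…,L} define the drift Δe(i) := Σ_{k=0}^{L} p_{k,i} (e_i − e_k) = e_i − Σ_{k=0}^{L} p_{k,i} e_k. Assume Δe(i)/e_i > 0 for every i ∈ {1,…,L}, and set ρ := min_{1 ≤ i ≤ L} Δe(i)/e_i. Let R = [p_{i,j}]_{i,j=1,…,L} and let p⁰ ∈ ℝᴸ be entrywise nonnegative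 with Σ_i p⁰_i ≤ 1. Then for every t ≥ 0, eᵀ Rᵗ p⁰ ≤ (1 − ρ)ᵗ · eᵀ p⁰. -/
/-!
From state `j` the error drops in expectation by at least a fraction `ρ`, i.e. the row
vector `w = (e₁, …, e_L)` satisfies `w R ≤ (1 - ρ) w` entrywise. Since `R` is entrywise
nonnegative this iterates to `w Rᵗ ≤ (1 - ρ)ᵗ w`; pairing with `p⁰ ≥ 0` gives the bound.
-/

open Matrix

namespace Matrix

section OrderedSemiring

variable {ι κ R : Type*} [Fintype ι] [CommSemiring R] [PartialOrder R] [IsOrderedRing R]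

lemma vecMul_le_vecMul_of_nonneg {M : Matrix ι κ R} (hM : ∀ i j, 0 ≤ M i j) {u v : ι → R}
    (huv : u ≤ v) : u ᵥ* M ≤ v ᵥ* M :=
  fun j => dotProduct_le_dotProduct_of_nonneg_right huv fun i => hM i j

variable [DecidableEq ι] {M : Matrix ι ι R} {w : ι → R} {c : R}

lemma vecMul_pow_le_pow_smul (hM : ∀ i j, 0 ≤ M i j) (hc : 0 ≤ c)
    (hw : w ᵥ* M ≤ c • w) : ∀ t : ℕ, w ᵥ* M ^ t ≤ c ^ t • w
  | 0 => by simp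
  | t + 1 =>
    calc w ᵥ* M ^ (t + 1) = (w ᵥ* M ^ t) ᵥ* M := by rw [pow_succ, vecMul_vecMul]
      _ ≤ (c ^ t • w) ᵥ* M :=
        vecMul_le_vecMul_of_nonneg hM (vecMul_pow_le_pow_smul hM hc hw t)
      _ = c ^ t • (w ᵥ* M) := smul_vecMul _ _ _
      _ ≤ c ^ t • (c • w) := smul_le_smul_of_nonneg_left hw (pow_nonneg hc t)
      _ = c ^ (t + 1) • w := by rw [smul_smul, pow_succ]

lemma dotProduct_pow_mulVec_le (hM : ∀ i j, 0 ≤ M i j) (hc : 0 ≤ c)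
    (hw : w ᵥ* M ≤ c • w) {v : ι → R} (hv : 0 ≤ v) (t : ℕ) :
    w ⬝ᵥ (M ^ t *ᵥ v) ≤ c ^ t * (w ⬝ᵥ v) :=
  calc w ⬝ᵥ (M ^ t *ᵥ v) = (w ᵥ* M ^ t) ⬝ᵥ v := dotProduct_mulVec _ _ _
    _ ≤ (c ^ t • w) ⬝ᵥ v :=
      dotProduct_le_dotProduct_of_nonneg_right (vecMul_pow_le_pow_smul hM hc hw t) hv
    _ = c ^ t * (w ⬝ᵥ v) := smul_dotProduct _ _ _

end OrderedSemiring

end Matrix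

lemma sum_mul_sub_eq_sub_sum_mul {ι : Type*} [Fintype ι] {p : ι → ℝ} (hp : ∑ k, p k = 1)
    (x : ℝ) (e : ι → ℝ) : ∑ k, p k * (x - e k) = x - ∑ k, p k * e k := by
  simp only [mul_sub, Finset.sum_sub_distrib, ← Finset.sum_mul, hp, one_mul]

lemma vecMul_submatrix_succ_eq_sub_drift {L : ℕ} {P : Matrix (Fin (L + 1)) (Fin (L + 1)) ℝ}
    (hPcol : ∀ j, ∑ i, P i j = 1) {e : Fin (L + 1) → ℝ} (he0 : e 0 = 0)
    {R : Matrix (Fin L) (Fin L) ℝ} (hR : ∀ i j : Fin L, R i j = P i.succ j.succ) (j : Fin L) :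
    ((fun i : Fin L => e i.succ) ᵥ* R) j = e j.succ - ∑ k, P k j.succ * (e j.succ - e k) := by
  rw [sum_mul_sub_eq_sub_sum_mul (hPcol _), Fin.sum_univ_succ, he0, mul_zero, zero_add,
    sub_sub_cancel]
  simp only [vecMul, dotProduct, hR, mul_comm]

theorem stmt_7_general (L : ℕ) (hL : 1 ≤ L)
    (P : Matrix (Fin (L + 1)) (Fin (L + 1)) ℝ)
    (hPnn : ∀ i j, 0 ≤ P i j) (hPcol : ∀ j, ∑ i, P i j = 1)
    (e : Fin (L + 1) → ℝ) (he0 : e 0 = 0) (hepos : ∀ i : Fin L, 0 < e i.succ)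
    (Δe : Fin L → ℝ)
    (hΔ : ∀ i : Fin L, Δe i = ∑ k, P k i.succ * (e i.succ - e k))
    (ρ : ℝ)
    (hρ : ρ = Finset.univ.inf' (Finset.univ_nonempty_iff.mpr ⟨(⟨0, hL⟩ : Fin L)⟩)
      (fun i : Fin L => Δe i / e i.succ))
    (R : Matrix (Fin L) (Fin L) ℝ) (hR : ∀ i j : Fin L, R i j = P i.succ j.succ)
    (p0 : Fin L → ℝ) (hp0 : ∀ i, 0 ≤ p0 i) :
    ∀ t : ℕ, (fun i : Fin L => e i.succ) ⬝ᵥ ((R ^ t) *ᵥ p0)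
      ≤ (1 - ρ) ^ t * ((fun i : Fin L => e i.succ) ⬝ᵥ p0) := by
  set w : Fin L → ℝ := fun i => e i.succ
  have hRnn : ∀ i j, 0 ≤ R i j := fun i j => hR i j ▸ hPnn _ _
  have hcontract : w ᵥ* R ≤ (1 - ρ) • w := fun j => by
    have hρj : ρ * w j ≤ Δe j :=
      (le_div_iff₀ (hepos j)).mp (hρ ▸ Finset.inf'_le _ (Finset.mem_univ j))
    rw [vecMul_submatrix_succ_eq_sub_drift hPcol he0 hR, ← hΔ, Pi.smul_apply, smul_eq_mul]
    linarith
  have hrate : 0 ≤ 1 - ρ := by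
    let i₀ : Fin L := ⟨0, hL⟩
    have hw : 0 ≤ w := fun i => (hepos i).le
    have : 0 ≤ (1 - ρ) * w i₀ :=
      (dotProduct_nonneg_of_nonneg hw fun i => hRnn i i₀).trans (hcontract i₀)
    exact nonneg_of_mul_nonneg_left this (hepos i₀)
  exact dotProduct_pow_mulVec_le hRnn hrate hcontract hp0

/-- convergence-rate upper bound `e^{[t]} ≤ (1-ρ)ᵗ e^{[0]}`. -/
theorem stmt_7 (L : ℕ) (hL : 1 ≤ L)
    (P : Matrix (Fin (L + 1)) (Fin (L + 1)) ℝ)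
    (hPnn : ∀ i j, 0 ≤ P i j) (hPcol : ∀ j, ∑ i, P i j = 1) (hP00 : P 0 0 = 1)
    (e : Fin (L + 1) → ℝ) (he0 : e 0 = 0) (hepos : ∀ i : Fin L, 0 < e i.succ)
    (Δe : Fin L → ℝ)
    (hΔ : ∀ i : Fin L, Δe i = ∑ k, P k i.succ * (e i.succ - e k))
    (hdrift : ∀ i : Fin L, 0 < Δe i / e i.succ)
    (ρ : ℝ)
    (hρ : ρ = Finset.univ.inf' (Finset.univ_nonempty_iff.mpr ⟨(⟨0, hL⟩ : Fin L)⟩)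
      (fun i : Fin L => Δe i / e i.succ))
    (R : Matrix (Fin L) (Fin L) ℝ) (hR : ∀ i j : Fin L, R i j = P i.succ j.succ)
    (p0 : Fin L → ℝ) (hp0 : ∀ i, 0 ≤ p0 i) (hp0sum : ∑ i, p0 i ≤ 1) :
    ∀ t : ℕ, (fun i : Fin L => e i.succ) ⬝ᵥ ((R ^ t) *ᵥ p0)
      ≤ (1 - ρ) ^ t * ((fun i : Fin L => e i.succ) ⬝ᵥ p0) :=
  stmt_7_general L hL P hPnn hPcol e he0 hepos Δe hΔ ρ hρ R hR p0 hp0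
end

section
/- Let L ≥ 1 and let B and B' be L×L real matrices with nonnegative entries. Suppose (i) T̂ B' ≥ T̂ B entrywise, and (ii) every entry of T̂ B' T̂⁻¹ is nonnegative. Then for every t ≥ 0, T̂ (B')ᵗ ≥ T̂ Bᵗ entrywise. -/
open Matrix

/-!
Since `T̂` is unitriangular, hence invertible, `C = T̂ B' T̂⁻¹` satisfies `T̂ B' = C T̂`, and by
induction `T̂ B^(t+1) = (T̂ B) B^t ≤ (T̂ B') B^t = C (T̂ B^t) ≤ C (T̂ B'^t) = T̂ B'^(t+1)`,
the inequalities using `B^t ≥ 0` and `C ≥ 0` respectively.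
-/

namespace Matrix

variable {l m n R : Type*} [Fintype m] [Semiring R] [PartialOrder R] [IsOrderedRing R]

theorem mul_apply_le_mul_apply_of_le_of_nonneg {A A' : Matrix l m R} {X : Matrix m n R}
    (hA : ∀ i j, A i j ≤ A' i j) (hX : ∀ i j, 0 ≤ X i j) (i : l) (j : n) :
    (A * X) i j ≤ (A' * X) i j :=
  Finset.sum_le_sum fun k _ => mul_le_mul_of_nonneg_right (hA i k) (hX k j)

theorem mul_apply_le_mul_apply_of_nonneg_of_le {C : Matrix l m R} {X X' : Matrix m n R}
    (hC : ∀ i j, 0 ≤ C i j) (hX : ∀ i j, X i j ≤ X' i j) (i : l) (j : n) :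
    (C * X) i j ≤ (C * X') i j :=
  Finset.sum_le_sum fun k _ => mul_le_mul_of_nonneg_left (hX k j) (hC i k)

theorem mul_pow_apply_le_of_mul_eq_mul [Fintype l] [DecidableEq m]
    {T : Matrix l m R} {B B' : Matrix m m R} {C : Matrix l l R}
    (hB : ∀ i j, 0 ≤ B i j) (hC : ∀ i j, 0 ≤ C i j) (hTB' : T * B' = C * T)
    (hle : ∀ i j, (T * B) i j ≤ (T * B') i j) (t : ℕ) :
    ∀ i j, (T * B ^ t) i j ≤ (T * B' ^ t) i j := by
  induction t with
  | zero => exact fun _ _ => le_rfl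
  | succ t ih =>
    intro i j
    calc (T * B ^ (t + 1)) i j = (T * B * B ^ t) i j := by rw [pow_succ', Matrix.mul_assoc]
      _ ≤ (T * B' * B ^ t) i j :=
        mul_apply_le_mul_apply_of_le_of_nonneg hle (pow_apply_nonneg hB t) i j
      _ = (C * (T * B ^ t)) i j := by rw [hTB', Matrix.mul_assoc]
      _ ≤ (C * (T * B' ^ t)) i j := mul_apply_le_mul_apply_of_nonneg_of_le hC ih i j
      _ = (T * B' ^ (t + 1)) i j := by
        rw [← Matrix.mul_assoc, ← hTB', pow_succ', Matrix.mul_assoc]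

end Matrix

theorem stmt_10_general (L : ℕ)
    (B B' : Matrix (Fin L) (Fin L) ℝ)
    (hBnn : ∀ i j, 0 ≤ B i j)
    (Th : Matrix (Fin L) (Fin L) ℝ)
    (hTh : ∀ i j : Fin L, Th i j = if i ≤ j then 1 else 0)
    (h1 : ∀ i j, (Th * B) i j ≤ (Th * B') i j)
    (h2 : ∀ i j, 0 ≤ (Th * B' * Th⁻¹) i j) :
    ∀ t : ℕ, ∀ i j, (Th * B ^ t) i j ≤ (Th * B' ^ t) i j := by
  have hTri : Th.IsUpperTriangular := fun i j (hji : j < i) => by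
    rw [hTh, if_neg hji.not_ge]
  have hdet : IsUnit Th.det := by simp [det_of_isUpperTriangular hTri, hTh]
  exact mul_pow_apply_le_of_mul_eq_mul hBnn h2 (nonsing_inv_mul_cancel_right Th _ hdet).symm h1

/-- sufficient condition for the matrix iteration of `B'` to be
slower than that of `B`: if `T̂ B' ≥ T̂ B` and `T̂ B' T̂⁻¹ ≥ 0` entrywise, then
`T̂ (B')ᵗ ≥ T̂ Bᵗ` entrywise for every `t`. -/
theorem stmt_10 (L : ℕ) (hL : 1 ≤ L)
    (B B' : Matrix (Fin L) (Fin L) ℝ)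
    (hBnn : ∀ i j, 0 ≤ B i j) (hB'nn : ∀ i j, 0 ≤ B' i j)
    (Th : Matrix (Fin L) (Fin L) ℝ)
    (hTh : ∀ i j : Fin L, Th i j = if i ≤ j then 1 else 0)
    (h1 : ∀ i j, (Th * B) i j ≤ (Th * B') i j)
    (h2 : ∀ i j, 0 ≤ (Th * B' * Th⁻¹) i j) :
    ∀ t : ℕ, ∀ i j, (Th * B ^ t) i j ≤ (Th * B' ^ t) i j :=
  stmt_10_general L B B' hBnn Th hTh h1 h2
end

section
/- Let L ≥ 1 and let P = [p_{i,j}] and P' = [p'_{i,j}] (i,j ∈ {0,1,…,L}) be upper triangular column-stochastic real matrices (entries nonnegative, each column summing to 1, and p_{i,j} = p'_{i,j} = 0 whenever i > j) with p_{0,0} = p'_{0,0} = 1. Suppose: (i) p'_{j,j} ≥ p_{j,j} for every j ∈ {1,…,L}; (ii) Σ_{l=0}^{i−1} (p_{l,j} − p'_{l,j}) ≥ 0 for all 1 ≤ i < j ≤ L; and (iii) Σ_{l=0}^{i} (p'_{l,j−1} − p'_{l,j}) ≥ 0 for all 0 ≤ i < j−1 with j ≤ L. Let R = [p_{i,j}]_{i,j=1,…,L}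 and R' = [p'_{i,j}]_{i,j=1,…,L}. Then for every t ≥ 0, T̂ (R')ᵗ ≥ T̂ Rᵗ entrywise, i.e., R' ⪰ R. -/
/-!
Write `U` for the upper triangular all-ones matrix, so that `(U * M) i j` is the tail sum
`∑_{l ≥ i} M l j` of the `j`-th column of `M`. By induction on `t`,
`U R^(t+1) = (U R) R^t ≤ (U R') R^t ≤ (U R') R'^t`. The first inequality holds because `R^t ≥ 0`
and `U R ≤ U R'`, which by column-stochasticity is conditions (i) and (ii). For the second, each
row of `U R'` is nonnegative and, by (iii), nondecreasing, while the columns of `R'^t - R^t` have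
nonnegative tail sums by the induction hypothesis; Abel summation makes the pairing nonnegative.
-/

open Matrix Finset

section UpperOnes

variable {α : Type*}

variable (α) in
def upperOnes [Zero α] [One α] (n : ℕ) : Matrix (Fin n) (Fin n) α :=
  of fun i j => if i ≤ j then 1 else 0

theorem upperOnes_mul_apply [NonAssocSemiring α] {n : ℕ} {o : Type*} (M : Matrix (Fin n) o α)
    (i : Fin n) (j : o) : (upperOnes α n * M) i j = ∑ m ∈ Ici i, M m j := by
  simp [upperOnes, mul_apply, ite_mul, sum_ite, filter_le_eq_Ici]

theorem upperOnes_mul_submatrix_succ [NonAssocSemiring α] {n : ℕ}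
    (M : Matrix (Fin (n + 1)) (Fin (n + 1)) α) (i j : Fin n) :
    (upperOnes α n * M.submatrix Fin.succ Fin.succ) i j =
      (upperOnes α (n + 1) * M) i.succ j.succ := by
  rw [upperOnes_mul_apply, upperOnes_mul_apply, Fin.sum_Ici_succ]
  rfl

variable [Ring α] [PartialOrder α] [IsOrderedRing α]

theorem sum_mul_nonneg_of_monotone {n : ℕ} {f h : Fin n → α} (hf : Monotone f)
    (hf_nonneg : ∀ k, 0 ≤ f k) (hh : ∀ k, 0 ≤ ∑ m ∈ Ici k, h m) : 0 ≤ ∑ k, f k * h k := by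
  induction n with
  | zero => simp
  | succ n ih =>
    -- one step of Abel summation: `f 0` meets the full tail sum, the increments `f k - f 0` recurse
    have hsplit : ∑ k, f k * h k = f 0 * ∑ k, h k + ∑ k : Fin n, (f k.succ - f 0) * h k.succ := by
      rw [mul_sum, ← sub_eq_iff_eq_add', ← sum_sub_distrib, Fin.sum_univ_succ, sub_self, zero_add]
      simp only [sub_mul]
    rw [hsplit]
    refine add_nonneg (mul_nonneg (hf_nonneg 0) (by simpa using hh 0)) (ih ?_ ?_ ?_)
    · exact fun a b hab => sub_le_sub_right (hf (Fin.succ_le_succ_iff.2 hab)) _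
    · exact fun k => sub_nonneg.2 (hf (Fin.zero_le _))
    · exact fun k => Fin.sum_Ici_succ h k ▸ hh k.succ

theorem upperOnes_mul_pow_le {n : ℕ} {R R' : Matrix (Fin n) (Fin n) α} (hR : ∀ i j, 0 ≤ R i j)
    (hR' : ∀ i j, 0 ≤ R' i j) (hle : ∀ i j, (upperOnes α n * R) i j ≤ (upperOnes α n * R') i j)
    (hmono : ∀ i, Monotone fun j => (upperOnes α n * R') i j) (t : ℕ) (i j : Fin n) :
    (upperOnes α n * R ^ t) i j ≤ (upperOnes α n * R' ^ t) i j := by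
  induction t generalizing i j with
  | zero => rfl
  | succ t ih =>
    set U := upperOnes α n
    calc (U * R ^ (t + 1)) i j = ∑ k, (U * R) i k * (R ^ t) k j := by
          rw [pow_succ', ← mul_assoc, mul_apply]
      _ ≤ ∑ k, (U * R') i k * (R ^ t) k j :=
          sum_le_sum fun k _ => mul_le_mul_of_nonneg_right (hle i k) (pow_apply_nonneg hR t k j)
      _ ≤ ∑ k, (U * R') i k * (R' ^ t) k j := by
          rw [← sub_nonneg, ← sum_sub_distrib]
          simp_rw [← mul_sub]
          refine sum_mul_nonneg_of_monotone (hmono i) (fun k => ?_) (fun k => ?_)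
          · rw [upperOnes_mul_apply]
            exact sum_nonneg fun m _ => hR' m k
          · rw [sum_sub_distrib, sub_nonneg, ← upperOnes_mul_apply, ← upperOnes_mul_apply]
            exact ih k j
      _ = (U * R' ^ (t + 1)) i j := by rw [pow_succ', ← mul_assoc, mul_apply]

end UpperOnes

section TailSums

variable {ι α : Type*}

theorem sum_Ici_eq_zero_of_lt [Preorder ι] [LocallyFiniteOrderTop ι] [AddCommMonoid α]
    {M : Matrix ι ι α} (htri : ∀ i j, j < i → M i j = 0) {a j : ι} (h : j < a) :
    ∑ l ∈ Ici a, M l j = 0 :=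
  sum_eq_zero fun l hl => htri l j (h.trans_le (mem_Ici.1 hl))

theorem sum_Ici_self_eq_diag [PartialOrder ι] [LocallyFiniteOrderTop ι] [AddCommMonoid α]
    {M : Matrix ι ι α} (htri : ∀ i j, j < i → M i j = 0) (j : ι) :
    ∑ l ∈ Ici j, M l j = M j j :=
  sum_eq_single_of_mem j (mem_Ici.2 le_rfl) fun l hl hne =>
    htri l j ((mem_Ici.1 hl).lt_of_ne' hne)

theorem sum_Ici_eq_one_sub_sum_lt [Fintype ι] [LinearOrder ι] [LocallyFiniteOrderTop ι]
    [AddCommGroup α] [One α] {M : Matrix ι ι α} {j : ι} (hcol : ∑ i, M i j = 1) (a : ι) :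
    ∑ l ∈ Ici a, M l j = 1 - ∑ l ∈ univ.filter (· < a), M l j := by
  rw [eq_sub_iff_add_eq', ← hcol, ← sum_filter_add_sum_filter_not univ (· < a)]
  simp only [not_lt, filter_le_eq_Ici]

end TailSums

section UpperTriangular

variable {α : Type*} [Ring α] [PartialOrder α] [IsOrderedRing α] {n : ℕ}
  {P P' : Matrix (Fin (n + 1)) (Fin (n + 1)) α}

theorem upperOnes_mul_succ_le (hP'nn : ∀ i j, 0 ≤ P' i j)
    (hPcol : ∀ j, ∑ i, P i j = 1) (hP'col : ∀ j, ∑ i, P' i j = 1)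
    (hPtri : ∀ i j, j < i → P i j = 0) (hP'tri : ∀ i j, j < i → P' i j = 0)
    (hdiag : ∀ j : Fin n, P j.succ j.succ ≤ P' j.succ j.succ)
    (hhead : ∀ i j : Fin (n + 1), 0 < (i : ℕ) → i < j →
      0 ≤ ∑ l ∈ univ.filter (· < i), (P l j - P' l j))
    (i k : Fin n) :
    (upperOnes α (n + 1) * P) i.succ k.succ ≤ (upperOnes α (n + 1) * P') i.succ k.succ := by
  rw [upperOnes_mul_apply, upperOnes_mul_apply]
  rcases lt_trichotomy i k with hik | rfl | hki
  · have h := hhead i.succ k.succ i.succ_pos (Fin.succ_lt_succ_iff.2 hik)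
    rw [sum_sub_distrib, sub_nonneg] at h
    rw [sum_Ici_eq_one_sub_sum_lt (hPcol _), sum_Ici_eq_one_sub_sum_lt (hP'col _)]
    exact sub_le_sub_left h 1
  · rw [sum_Ici_self_eq_diag hPtri, sum_Ici_self_eq_diag hP'tri]
    exact hdiag i
  · rw [sum_Ici_eq_zero_of_lt hPtri (Fin.succ_lt_succ_iff.2 hki)]
    exact sum_nonneg fun l _ => hP'nn l _

theorem upperOnes_mul_castSucc_le_succ (hP'nn : ∀ i j, 0 ≤ P' i j)
    (hP'col : ∀ j, ∑ i, P' i j = 1) (hP'tri : ∀ i j, j < i → P' i j = 0)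
    (hhead : ∀ (i : Fin (n + 1)) (j : Fin n), (i : ℕ) < (j : ℕ) →
      0 ≤ ∑ l ∈ univ.filter (· ≤ i), (P' l j.castSucc - P' l j.succ))
    (i j : Fin n) :
    (upperOnes α (n + 1) * P') i.succ j.castSucc ≤ (upperOnes α (n + 1) * P') i.succ j.succ := by
  rw [upperOnes_mul_apply, upperOnes_mul_apply]
  rcases lt_or_ge i j with hij | hji
  · have h := hhead i.castSucc j hij
    rw [sum_sub_distrib, sub_nonneg] at h
    rw [sum_Ici_eq_one_sub_sum_lt (hP'col _), sum_Ici_eq_one_sub_sum_lt (hP'col _)]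
    simp_rw [← Fin.le_castSucc_iff]
    exact sub_le_sub_left h 1
  · rw [sum_Ici_eq_zero_of_lt hP'tri (Fin.castSucc_lt_succ_iff.2 hji)]
    exact sum_nonneg fun l _ => hP'nn l _

end UpperTriangular

theorem stmt_11_general (L : ℕ)
    (P P' : Matrix (Fin (L + 1)) (Fin (L + 1)) ℝ)
    (hPnn : ∀ i j, 0 ≤ P i j) (hP'nn : ∀ i j, 0 ≤ P' i j)
    (hPcol : ∀ j, ∑ i, P i j = 1) (hP'col : ∀ j, ∑ i, P' i j = 1)
    (hPtri : ∀ i j, j < i → P i j = 0) (hP'tri : ∀ i j, j < i → P' i j = 0)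
    (hcond1 : ∀ j : Fin L, P j.succ j.succ ≤ P' j.succ j.succ)
    (hcond2 : ∀ i j : Fin (L + 1), 0 < (i : ℕ) → i < j →
      0 ≤ ∑ l ∈ Finset.univ.filter (fun l : Fin (L + 1) => l < i), (P l j - P' l j))
    (hcond3 : ∀ (i : Fin (L + 1)) (j : Fin L), (i : ℕ) < (j : ℕ) →
      0 ≤ ∑ l ∈ Finset.univ.filter (fun l : Fin (L + 1) => l ≤ i),
        (P' l j.castSucc - P' l j.succ))
    (R R' : Matrix (Fin L) (Fin L) ℝ)
    (hR : ∀ i j : Fin L, R i j = P i.succ j.succ)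
    (hR' : ∀ i j : Fin L, R' i j = P' i.succ j.succ)
    (Th : Matrix (Fin L) (Fin L) ℝ)
    (hTh : ∀ i j : Fin L, Th i j = if i ≤ j then 1 else 0) :
    ∀ t : ℕ, ∀ i j, (Th * R ^ t) i j ≤ (Th * R' ^ t) i j := by
  obtain rfl : Th = upperOnes ℝ L := ext hTh
  obtain rfl : R = P.submatrix Fin.succ Fin.succ := ext hR
  obtain rfl : R' = P'.submatrix Fin.succ Fin.succ := ext hR'
  refine upperOnes_mul_pow_le (fun _ _ => hPnn _ _) (fun _ _ => hP'nn _ _) (fun i k => ?_)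
    (fun i => (monotone_iff_forall_covBy _).2 fun k k' hkk' => ?_)
  · simp only [upperOnes_mul_submatrix_succ]
    exact upperOnes_mul_succ_le hP'nn hPcol hP'col hPtri hP'tri hcond1 hcond2 i k
  · have hk' : k'.castSucc = k.succ :=
      Fin.ext (Nat.covBy_iff_add_one_eq.1 (Fin.covBy_iff.1 hkk')).symm
    simp only [upperOnes_mul_submatrix_succ, ← hk']
    exact upperOnes_mul_castSucc_le_succ hP'nn hP'col hP'tri hcond3 i k'

/-- construction of a slower chain from an upper triangular
transition matrix: under conditions (i)–(iii), `R' ⪰ R`. -/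
theorem stmt_11 (L : ℕ) (hL : 1 ≤ L)
    (P P' : Matrix (Fin (L + 1)) (Fin (L + 1)) ℝ)
    (hPnn : ∀ i j, 0 ≤ P i j) (hP'nn : ∀ i j, 0 ≤ P' i j)
    (hPcol : ∀ j, ∑ i, P i j = 1) (hP'col : ∀ j, ∑ i, P' i j = 1)
    (hPtri : ∀ i j, j < i → P i j = 0) (hP'tri : ∀ i j, j < i → P' i j = 0)
    (hP00 : P 0 0 = 1) (hP'00 : P' 0 0 = 1)
    (hcond1 : ∀ j : Fin L, P j.succ j.succ ≤ P' j.succ j.succ)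
    (hcond2 : ∀ i j : Fin (L + 1), 0 < (i : ℕ) → i < j →
      0 ≤ ∑ l ∈ Finset.univ.filter (fun l : Fin (L + 1) => l < i), (P l j - P' l j))
    (hcond3 : ∀ (i : Fin (L + 1)) (j : Fin L), (i : ℕ) < (j : ℕ) →
      0 ≤ ∑ l ∈ Finset.univ.filter (fun l : Fin (L + 1) => l ≤ i),
        (P' l j.castSucc - P' l j.succ))
    (R R' : Matrix (Fin L) (Fin L) ℝ)
    (hR : ∀ i j : Fin L, R i j = P i.succ j.succ)
    (hR' : ∀ i j : Fin L, R' i j = P' i.succ j.succ)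
    (Th : Matrix (Fin L) (Fin L) ℝ)
    (hTh : ∀ i j : Fin L, Th i j = if i ≤ j then 1 else 0) :
    ∀ t : ℕ, ∀ i j, (Th * R ^ t) i j ≤ (Th * R' ^ t) i j :=
  stmt_11_general L P P' hPnn hP'nn hPcol hP'col hPtri hP'tri hcond1 hcond2 hcond3 R R' hR hR' Th
    hTh
end

section
/- Let L ≥ 1 and let R be an L×L upper triangular real matrix with nonnegative entries and diagonal entries (eigenvalues) λ_1,…,λ_L. Let e, p⁰ ∈ ℝᴸ be entrywise nonnegative. Then for every δ > 0 there exist nonnegative real numbers ε_1,…,ε_L with ε_i ≤ δ such that the values λ_1+ε_1, …, λ_L+ε_L are pairwise distinct, and there exist real coefficients c_1,…,c_L such that for every t ≥ 1, eᵀ Rᵗ p⁰ ≤ Σ_{i=1}^{L} c_i (λ_i + ε_i)ᵗ. -/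
/-!
Perturb the diagonal by `εᵢ = s (i + 1)`: for all but finitely many `s` the values `λᵢ + εᵢ` are
distinct. Let `μ = maxᵢ (λᵢ + εᵢ)`, which exceeds every `λᵢ` by at least `s`. With `η` small, the
positive vector `vᵢ = ηⁱ` satisfies `R v ≤ μ v`, because the strictly upper part of `R` only
contributes `O(η ηⁱ)` to row `i`. As `R` is nonnegative this iterates to `Rᵗ v ≤ μᵗ v`, and since
`p⁰ ≤ K v` for some `K`, the error is at most `K (e ⬝ᵥ v) μᵗ`: one term of the required sum.
-/

open Matrix Finset

lemma exists_mem_Ioo_injective_add_mul {ι : Type*} [Fintype ι] (a b : ι → ℝ)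
    (hb : Function.Injective b) {r : ℝ} (hr : 0 < r) :
    ∃ s ∈ Set.Ioo 0 r, Function.Injective fun i => a i + s * b i := by
  classical
  let collisions : Finset ℝ :=
    univ.offDiag.image fun p : ι × ι => (a p.2 - a p.1) / (b p.1 - b p.2)
  obtain ⟨s, hs, hs_coll⟩ := (Set.Ioo_infinite hr).exists_notMem_finset collisions
  refine ⟨s, hs, fun i j hij => ?_⟩
  by_contra hne
  apply hs_coll
  refine mem_image.mpr ⟨(i, j), by simpa using hne, ?_⟩
  rw [div_eq_iff (sub_ne_zero.mpr (hb.ne hne))]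
  linarith [show a i + s * b i = a j + s * b j from hij]

section NonnegMatrix

variable {n : Type*} [Fintype n] {A : Matrix n n ℝ}

lemma Matrix.mulVec_mono_of_nonneg (hA : ∀ i j, 0 ≤ A i j) {u v : n → ℝ} (huv : u ≤ v) :
    A *ᵥ u ≤ A *ᵥ v := fun i =>
  dotProduct_le_dotProduct_of_nonneg_left huv fun j => hA i j

lemma Matrix.pow_mulVec_le_of_mulVec_le [DecidableEq n] (hA : ∀ i j, 0 ≤ A i j) {v : n → ℝ}
    {μ : ℝ} (hμ : 0 ≤ μ) (hAv : A *ᵥ v ≤ μ • v) (t : ℕ) : (A ^ t) *ᵥ v ≤ μ ^ t • v := by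
  induction t with
  | zero => simp
  | succ t ih =>
    calc (A ^ (t + 1)) *ᵥ v = A *ᵥ ((A ^ t) *ᵥ v) := by rw [pow_succ', mulVec_mulVec]
      _ ≤ A *ᵥ (μ ^ t • v) := mulVec_mono_of_nonneg hA ih
      _ = μ ^ t • (A *ᵥ v) := mulVec_smul _ _ _
      _ ≤ μ ^ t • (μ • v) := smul_le_smul_of_nonneg_left hAv (pow_nonneg hμ t)
      _ = μ ^ (t + 1) • v := by rw [smul_smul, pow_succ]

lemma Matrix.dotProduct_pow_mulVec_le_s12 [DecidableEq n] (hA : ∀ i j, 0 ≤ A i j)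
    {e p v : n → ℝ} (he : 0 ≤ e) (hp : 0 ≤ p) (hv : ∀ i, 0 < v i) {μ : ℝ} (hμ : 0 ≤ μ)
    (hAv : A *ᵥ v ≤ μ • v) (t : ℕ) :
    e ⬝ᵥ ((A ^ t) *ᵥ p) ≤ (∑ i, p i / v i) * (e ⬝ᵥ v) * μ ^ t := by
  set K := ∑ i, p i / v i
  have hK : 0 ≤ K := sum_nonneg fun i _ => div_nonneg (hp i) (hv i).le
  have hpv : p ≤ K • v := fun i => by
    calc p i = p i / v i * v i := (div_mul_cancel₀ _ (hv i).ne').symm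
      _ ≤ K * v i := mul_le_mul_of_nonneg_right
          (single_le_sum (f := fun j => p j / v j) (fun j _ => div_nonneg (hp j) (hv j).le)
            (mem_univ i)) (hv i).le
  calc e ⬝ᵥ ((A ^ t) *ᵥ p) ≤ e ⬝ᵥ ((A ^ t) *ᵥ (K • v)) :=
        dotProduct_le_dotProduct_of_nonneg_left
          (mulVec_mono_of_nonneg (pow_apply_nonneg hA t) hpv) he
    _ = K * (e ⬝ᵥ ((A ^ t) *ᵥ v)) := by rw [mulVec_smul, dotProduct_smul, smul_eq_mul]
    _ ≤ K * (e ⬝ᵥ (μ ^ t • v)) := mul_le_mul_of_nonneg_left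
        (dotProduct_le_dotProduct_of_nonneg_left (pow_mulVec_le_of_mulVec_le hA hμ hAv t) he) hK
    _ = K * (e ⬝ᵥ v) * μ ^ t := by rw [dotProduct_smul, smul_eq_mul]; ring

end NonnegMatrix

lemma exists_pos_mulVec_le_of_upper_triangular {L : ℕ} {R : Matrix (Fin L) (Fin L) ℝ}
    (hR : ∀ i j, 0 ≤ R i j) (hRtri : ∀ i j : Fin L, j < i → R i j = 0) {g μ : ℝ} (hg : 0 < g)
    (hdiag : ∀ i, R i i + g ≤ μ) : ∃ v : Fin L → ℝ, (∀ i, 0 < v i) ∧ R *ᵥ v ≤ μ • v := by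
  set S := ∑ i, ∑ j, R i j
  have hS : 0 ≤ S := sum_nonneg fun i _ => sum_nonneg fun j _ => hR i j
  set η := g / (g + S)
  have hη0 : 0 < η := by positivity
  have hη1 : η ≤ 1 := (div_le_one (by positivity)).mpr (by linarith)
  have hηS : η * S ≤ g := by
    rw [div_mul_eq_mul_div, div_le_iff₀ (by positivity)]; nlinarith
  refine ⟨fun i => η ^ (i : ℕ), fun i => by positivity, fun i => ?_⟩
  have hterm : ∀ j,
      R i j * η ^ (j : ℕ) ≤ η ^ (i : ℕ) * ((if j = i then R i i else 0) + η * R i j) := by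
    intro j
    rcases lt_trichotomy j i with hji | rfl | hij
    · simp [hRtri i j hji, hji.ne]
    · rw [if_pos rfl, mul_comm]
      exact mul_le_mul_of_nonneg_left (le_add_of_nonneg_right (mul_nonneg hη0.le (hR j j)))
        (by positivity)
    · rw [if_neg hij.ne', zero_add, ← mul_assoc, ← pow_succ, mul_comm]
      exact mul_le_mul_of_nonneg_right (pow_le_pow_of_le_one hη0.le hη1 hij) (hR i j)
  have hrow : ∑ j, R i j ≤ S := single_le_sum (f := fun i => ∑ j, R i j)
    (fun i _ => sum_nonneg fun j _ => hR i j) (mem_univ i)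
  calc (R *ᵥ fun i => η ^ (i : ℕ)) i = ∑ j, R i j * η ^ (j : ℕ) := rfl
    _ ≤ ∑ j, η ^ (i : ℕ) * ((if j = i then R i i else 0) + η * R i j) :=
        sum_le_sum fun j _ => hterm j
    _ = η ^ (i : ℕ) * (R i i + η * ∑ j, R i j) := by
        rw [← mul_sum, sum_add_distrib, sum_ite_eq', if_pos (mem_univ i), mul_sum]
    _ ≤ η ^ (i : ℕ) * (R i i + g) := by
        gcongr; exact (mul_le_mul_of_nonneg_left hrow hη0.le).trans hηS
    _ ≤ η ^ (i : ℕ) * μ := by gcongr; exact hdiag i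
    _ = (μ • fun i => η ^ (i : ℕ)) i := mul_comm _ _

/-- for an upper triangular nonnegative matrix `R`, the error is
upper-bounded by `Σᵢ cᵢ (λᵢ + εᵢ)ᵗ` with arbitrarily small `εᵢ ≥ 0` making the
perturbed eigenvalues pairwise distinct. -/
theorem stmt_12 (L : ℕ) (hL : 1 ≤ L)
    (R : Matrix (Fin L) (Fin L) ℝ)
    (hRnn : ∀ i j, 0 ≤ R i j) (hRtri : ∀ i j : Fin L, j < i → R i j = 0)
    (e p0 : Fin L → ℝ) (he : ∀ i, 0 ≤ e i) (hp0 : ∀ i, 0 ≤ p0 i) :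
    ∀ δ : ℝ, 0 < δ → ∃ ε : Fin L → ℝ,
      (∀ i, 0 ≤ ε i ∧ ε i ≤ δ) ∧
      (∀ i j : Fin L, i ≠ j → R i i + ε i ≠ R j j + ε j) ∧
      ∃ c : Fin L → ℝ, ∀ t : ℕ, 1 ≤ t →
        e ⬝ᵥ ((R ^ t) *ᵥ p0) ≤ ∑ i, c i * (R i i + ε i) ^ t := by
  intro δ hδ
  have hLpos : (0 : ℝ) < L := by exact_mod_cast hL
  obtain ⟨s, ⟨hs0, hsδ⟩, hinj⟩ := exists_mem_Ioo_injective_add_mul (fun i => R i i)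
    (fun i : Fin L => ((i : ℕ) : ℝ) + 1) (fun i j h => by simpa [Fin.val_inj] using h)
    (div_pos hδ hLpos)
  set ε : Fin L → ℝ := fun i => s * (((i : ℕ) : ℝ) + 1)
  have hε : ∀ i, s ≤ ε i := fun i => le_mul_of_one_le_right hs0.le (by simp)
  refine ⟨ε, fun i => ⟨hs0.le.trans (hε i), ?_⟩, fun i j hij h => hij (hinj h), ?_⟩
  · calc ε i ≤ δ / L * L :=
          mul_le_mul hsδ.le (by exact_mod_cast i.isLt) (by positivity) (by positivity)
      _ = δ := div_mul_cancel₀ δ hLpos.ne'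
  obtain ⟨i₀, -, hmax⟩ := exists_max_image univ (fun i => R i i + ε i) ⟨⟨0, hL⟩, mem_univ _⟩
  have hμ : 0 ≤ R i₀ i₀ + ε i₀ := by linarith [hRnn i₀ i₀, hε i₀]
  obtain ⟨v, hv, hRv⟩ :=
    exists_pos_mulVec_le_of_upper_triangular (μ := R i₀ i₀ + ε i₀) hRnn hRtri hs0
      (fun i => by linarith [hε i, hmax i (mem_univ i)])
  refine ⟨fun i => if i = i₀ then (∑ i, p0 i / v i) * (e ⬝ᵥ v) else 0, fun t _ => ?_⟩
  simp only [ite_mul, zero_mul, sum_ite_eq', mem_univ, if_true]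
  exact dotProduct_pow_mulVec_le_s12 hRnn he hp0 hv hμ hRv t
end

section
/- Let n ≥ 1 and L ≥ 1, and let P = [p_{i,j}] (i,j ∈ {0,1,…,L}) be a column-stochastic real matrix with p_{0,0} = 1. Let e_0 = 0 and let e_1,…,e_L be error values that are positive integers with e_j ≤ n for every j ∈ {1,…,L}. Assume the chain is elitist, i.e., p_{i,j} = 0 whenever e_i > e_j, and assume for every j ∈ {1,…,L} that Σ_{i : e_i < e_j} p_{i,j} ≥ (1/n)(1 − 1/n)^{n−1}. Let R = [p_{i,j}]_{i,j=1,…,L} and let p⁰ ∈ ℝᴸ be entrywise nonnegative with Σ_i p⁰_i ≤ 1. Then for every t ≥ 0, eᵀ Rᵗ p⁰ ≤ (1 − 1/(e·n²))ᵗ · eᵀ p⁰, where e in the base denotes Euler's number. -/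
/-!
The error `eᵀ Rᵗ p⁰` contracts by the factor `1 - δ`, `δ = 1/(e n²)`, at every generation.
Column `j` of `P` is a probability distribution which, by elitism, puts no mass above `e_j`,
and by integrality puts its improving mass `s_j` at errors `≤ e_j - 1`; hence the expected
error after one step from `j` is at most `e_j - s_j`. The bound `(1 - 1/n)^(n-1) ≥ e⁻¹` gives
`s_j ≥ 1/(e n) ≥ δ e_j` because `e_j ≤ n`, so `eᵀ R ≤ (1 - δ) eᵀ` entrywise, and this
iterates since `R` and `p⁰` are nonnegative.
-/

open Matrix Finset

theorem Real.exp_neg_one_le_one_sub_one_div_pow (n : ℕ) :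
    Real.exp (-1) ≤ (1 - 1 / (n : ℝ)) ^ (n - 1) := by
  obtain _ | _ | k := n
  · simp
  · simp
  have hbase : 1 - 1 / ((k + 1 + 1 : ℕ) : ℝ) = (1 + ((k + 1 : ℕ) : ℝ)⁻¹)⁻¹ := by
    push_cast
    field_simp
    ring
  rw [Nat.add_sub_cancel, hbase, inv_pow, Real.exp_neg]
  exact inv_anti₀ (by positivity) Real.one_add_inv_pow_le_exp

theorem one_div_exp_mul_sq_le_one (n : ℕ) : 1 / (Real.exp 1 * (n : ℝ) ^ 2) ≤ 1 := by
  rcases n.eq_zero_or_pos with rfl | hn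
  · simp
  have hn' : (1 : ℝ) ≤ n := by exact_mod_cast hn
  exact div_le_one_of_le₀ (one_le_mul_of_one_le_of_one_le (Real.one_le_exp zero_le_one)
    (one_le_pow₀ hn')) (by positivity)

theorem one_div_exp_mul_sq_mul_self_le (n : ℕ) :
    1 / (Real.exp 1 * (n : ℝ) ^ 2) * n ≤ 1 / (n : ℝ) * (1 - 1 / (n : ℝ)) ^ (n - 1) := by
  rcases n.eq_zero_or_pos with rfl | hn
  · simp
  have hn' : (n : ℝ) ≠ 0 := by positivity
  calc 1 / (Real.exp 1 * (n : ℝ) ^ 2) * n = 1 / (n : ℝ) * Real.exp (-1) := by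
        rw [Real.exp_neg]
        field_simp
    _ ≤ 1 / (n : ℝ) * (1 - 1 / (n : ℝ)) ^ (n - 1) := by
        gcongr
        exact Real.exp_neg_one_le_one_sub_one_div_pow n

theorem sum_mul_le_sub_sum_filter_lt {ι : Type*} [Fintype ι] {e q : ι → ℝ} {c : ℝ}
    (hq : ∀ i, 0 ≤ q i) (hsum : ∑ i, q i = 1) (hgap : ∀ i, e i < c → e i + 1 ≤ c)
    (hzero : ∀ i, c < e i → q i = 0) :
    ∑ i, e i * q i ≤ c - ∑ i ∈ univ.filter (fun i => e i < c), q i := by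
  calc ∑ i, e i * q i ≤ ∑ i, (c * q i - if e i < c then q i else 0) := by
        refine sum_le_sum fun i _ => ?_
        split_ifs with hlt
        · nlinarith [hgap i hlt, hq i]
        · rcases (not_lt.1 hlt).eq_or_lt with heq | hgt
          · rw [heq, sub_zero]
          · simp [hzero i hgt]
    _ = c - ∑ i ∈ univ.filter (fun i => e i < c), q i := by
        rw [sum_sub_distrib, ← mul_sum, hsum, mul_one, sum_filter]

section OrderedSemiring

variable {ι R : Type*} [Fintype ι] [CommSemiring R] [PartialOrder R] [IsOrderedRing R]

theorem Matrix.mulVec_nonneg {A : Matrix ι ι R} (hA : ∀ i j, 0 ≤ A i j) {q : ι → R}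
    (hq : 0 ≤ q) : 0 ≤ A *ᵥ q :=
  fun i => dotProduct_nonneg_of_nonneg (hA i) hq

theorem Matrix.dotProduct_mulVec_le_of_vecMul_le {A : Matrix ι ι R} {f q : ι → R} {ρ : R}
    (hf : f ᵥ* A ≤ ρ • f) (hq : 0 ≤ q) : f ⬝ᵥ (A *ᵥ q) ≤ ρ * (f ⬝ᵥ q) := by
  rw [dotProduct_mulVec, ← smul_eq_mul, ← smul_dotProduct]
  exact dotProduct_le_dotProduct_of_nonneg_right hf hq

theorem Matrix.dotProduct_pow_mulVec_le_of_vecMul_le [DecidableEq ι] {A : Matrix ι ι R}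
    {f q : ι → R} {ρ : R} (hA : ∀ i j, 0 ≤ A i j) (hρ : 0 ≤ ρ) (hf : f ᵥ* A ≤ ρ • f)
    (hq : 0 ≤ q) (t : ℕ) :
    f ⬝ᵥ (A ^ t *ᵥ q) ≤ ρ ^ t * (f ⬝ᵥ q) := by
  induction t generalizing q with
  | zero => simp
  | succ t ih =>
    calc f ⬝ᵥ (A ^ (t + 1) *ᵥ q) = f ⬝ᵥ (A ^ t *ᵥ (A *ᵥ q)) := by
          rw [pow_succ, mulVec_mulVec]
      _ ≤ ρ ^ t * (f ⬝ᵥ (A *ᵥ q)) := ih (mulVec_nonneg hA hq)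
      _ ≤ ρ ^ t * (ρ * (f ⬝ᵥ q)) :=
          mul_le_mul_of_nonneg_left (dotProduct_mulVec_le_of_vecMul_le hf hq) (pow_nonneg hρ t)
      _ = ρ ^ (t + 1) * (f ⬝ᵥ q) := by ring

end OrderedSemiring

theorem stmt_16_general (n L : ℕ)
    (P : Matrix (Fin (L + 1)) (Fin (L + 1)) ℝ)
    (hPnn : ∀ i j, 0 ≤ P i j) (hPcol : ∀ j, ∑ i, P i j = 1)
    (e : Fin (L + 1) → ℝ) (he0 : e 0 = 0)
    (heint : ∀ j : Fin L, ∃ m : ℕ, 0 < m ∧ m ≤ n ∧ e j.succ = m)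
    (helitist : ∀ i j : Fin (L + 1), e j < e i → P i j = 0)
    (himp : ∀ j : Fin L,
      (1 / (n : ℝ)) * (1 - 1 / (n : ℝ)) ^ (n - 1)
        ≤ ∑ i ∈ Finset.univ.filter (fun i : Fin (L + 1) => e i < e j.succ),
            P i j.succ)
    (R : Matrix (Fin L) (Fin L) ℝ) (hR : ∀ i j : Fin L, R i j = P i.succ j.succ)
    (p0 : Fin L → ℝ) (hp0 : ∀ i, 0 ≤ p0 i) :
    ∀ t : ℕ, (fun i : Fin L => e i.succ) ⬝ᵥ ((R ^ t) *ᵥ p0)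
      ≤ (1 - 1 / (Real.exp 1 * (n : ℝ) ^ 2)) ^ t
          * ((fun i : Fin L => e i.succ) ⬝ᵥ p0) := by
  set δ := 1 / (Real.exp 1 * (n : ℝ) ^ 2)
  have he_nat : ∀ i, ∃ k : ℕ, e i = k := Fin.cases ⟨0, by simp [he0]⟩
    fun j => (heint j).imp fun m hm => hm.2.2
  have hgap : ∀ i j, e i < e j → e i + 1 ≤ e j := by
    intro i j h
    obtain ⟨k, hk⟩ := he_nat i
    obtain ⟨l, hl⟩ := he_nat j
    rw [hk, hl] at h ⊢
    exact_mod_cast Nat.succ_le_of_lt (by exact_mod_cast h)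
  have hcol : (fun i : Fin L => e i.succ) ᵥ* R ≤ (1 - δ) • fun i : Fin L => e i.succ := by
    intro j
    obtain ⟨m, -, hmn, hm⟩ := heint j
    have hdrift := sum_mul_le_sub_sum_filter_lt (fun i => hPnn i j.succ) (hPcol j.succ)
      (fun i => hgap i j.succ) (fun i => helitist i j.succ)
    have hδ : δ * e j.succ ≤ δ * n := by
      rw [hm]; gcongr
    have hcolsum : ((fun i : Fin L => e i.succ) ᵥ* R) j = ∑ i, e i * P i j.succ := by
      simp [vecMul, dotProduct, Fin.sum_univ_succ, he0, hR]
    simp only [hcolsum, Pi.smul_apply, smul_eq_mul]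
    linarith [one_div_exp_mul_sq_mul_self_le n, himp j]
  exact dotProduct_pow_mulVec_le_of_vecMul_le (fun i j => hR i j ▸ hPnn _ _)
    (sub_nonneg.2 (one_div_exp_mul_sq_le_one n)) hcol hp0

/-- abstract LeadingOnes analysis: for an elitist chain with
integer error values in `{1,…,n}` and improvement probability at least
`(1/n)(1-1/n)^{n-1}`, the error satisfies `e^{[t]} ≤ (1 - 1/(e·n²))ᵗ e^{[0]}`. -/
theorem stmt_16 (n L : ℕ) (hn : 1 ≤ n) (hL : 1 ≤ L)
    (P : Matrix (Fin (L + 1)) (Fin (L + 1)) ℝ)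
    (hPnn : ∀ i j, 0 ≤ P i j) (hPcol : ∀ j, ∑ i, P i j = 1) (hP00 : P 0 0 = 1)
    (e : Fin (L + 1) → ℝ) (he0 : e 0 = 0)
    (heint : ∀ j : Fin L, ∃ m : ℕ, 0 < m ∧ m ≤ n ∧ e j.succ = m)
    (helitist : ∀ i j : Fin (L + 1), e j < e i → P i j = 0)
    (himp : ∀ j : Fin L,
      (1 / (n : ℝ)) * (1 - 1 / (n : ℝ)) ^ (n - 1)
        ≤ ∑ i ∈ Finset.univ.filter (fun i : Fin (L + 1) => e i < e j.succ),
            P i j.succ)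
    (R : Matrix (Fin L) (Fin L) ℝ) (hR : ∀ i j : Fin L, R i j = P i.succ j.succ)
    (p0 : Fin L → ℝ) (hp0 : ∀ i, 0 ≤ p0 i) (hp0sum : ∑ i, p0 i ≤ 1) :
    ∀ t : ℕ, (fun i : Fin L => e i.succ) ⬝ᵥ ((R ^ t) *ᵥ p0)
      ≤ (1 - 1 / (Real.exp 1 * (n : ℝ) ^ 2)) ^ t
          * ((fun i : Fin L => e i.succ) ⬝ᵥ p0) :=
  stmt_16_general n L P hPnn hPcol e he0 heint helitist himp R hR p0 hp0
end
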